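/- arXiv:1706.04911 — 4 statements merged into one kernel-verified Lean document; each statement's English description precedes it below -/
import Mathlib

section
/- Let λ be an uncountable regular cardinal and let X = ∏_{α<λ} X_α be a product of compact metrizable spaces X_α each of which contains at least two points. Suppose Y ⊆ X satisfies that the projection of Y onto ∏_{α<β} X_α is all of ∏_{α<β} X_α for each β < λ. If S ⊆ Y is an HFD set in X, then S has a cluster point in Y, but no injective sequence of points of S converges in X. In particular, if Y itself is HFD in X, then Y is a countably compact dense subspace of X containing no non-trivial convergent sequences. -/
/-- A space is countably compact if every countable open cover has a finite subcover. -/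
def CountablyCompact (X : Type*) [TopologicalSpace X] : Prop :=
  ∀ U : ℕ → Set X, (∀ n, IsOpen (U n)) → (⋃ n, U n) = Set.univ →
    ∃ F : Finset ℕ, (⋃ n ∈ F, U n) = Set.univ

/-- `S ⊆ ∏_{α<λ} X α` (`λ = c.ord`) is finally dense if for some `β < λ` the projection of
`S` to the coordinates in `[β, λ)` is dense in `∏_{β ≤ α < λ} X α`. -/
def FinallyDenseP {c : Cardinal} {X : {o : Ordinal // o < c.ord} → Type*}
    [∀ i, TopologicalSpace (X i)] (S : Set (∀ i, X i)) : Prop :=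
  ∃ β < c.ord,
    Dense {g : ∀ i : {i : {o : Ordinal // o < c.ord} // β ≤ i.val}, X i.val |
      ∃ y ∈ S, ∀ i, g i = y i.val}

/-- An infinite subset of the product is HFD (hereditarily finally dense) if every infinite
subset of it is finally dense. -/
def IsHFDP {c : Cardinal} {X : {o : Ordinal // o < c.ord} → Type*}
    [∀ i, TopologicalSpace (X i)] (Y : Set (∀ i, X i)) : Prop :=
  Y.Infinite ∧ ∀ S ⊆ Y, S.Infinite → FinallyDenseP S

/-!
Every infinite subset of an HFD set `S` projects densely onto a tail product `∏_{δ ≤ α < λ} X α`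
for some `δ < λ`. Fix countable bases of the factors. For `δ < λ` there are fewer than `λ` basic
cylinders supported on coordinates `≤ δ`, so regularity of `λ` yields `β < λ` such that every
infinite trace of `S` on a basic cylinder supported below `β` projects densely onto a tail product
from some level `≤ β`. Let `z` be a cluster point of the projections of `S` to the compact space
`∏_{α<β} X α`, and `y ∈ Y` an extension of `z`. A basic neighbourhood of `y` splits into a cylinder
below `β`, whose trace on `S` is infinite because `z` is a cluster point, and a constraint above
`β`, which this trace then meets; so `y` is an accumulation point of `S`.

A convergent sequence together with its limit is closed and countable, so its projection cannot be
dense in a tail product, which is uncountable.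
-/

open Filter Topology Set Cardinal TopologicalSpace

universe u v

section Pi

variable {ι : Type*} {X : ι → Type*}

theorem Pi.uncountable_of_infinite [Infinite ι] [∀ i, Nontrivial (X i)] :
    Uncountable (∀ i, X i) := by
  rw [← aleph0_lt_mk_iff, mk_pi]
  calc ℵ₀ < 2 ^ ℵ₀ := cantor ℵ₀
    _ ≤ (2 : Cardinal) ^ lift #ι := power_le_power_left two_ne_zero (by simp)
    _ = Cardinal.prod fun _ : ι => (2 : Cardinal) := by simp [prod_const]
    _ ≤ Cardinal.prod fun i => #(X i) := prod_le_prod _ _ fun i => two_le_iff.2 (exists_pair_ne _)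

variable [∀ i, TopologicalSpace (X i)]

theorem Dense.exists_mem_pi_of_restrict {p : ι → Prop} {B : Set (∀ i, X i)}
    (hB : Dense (Subtype.restrict p '' B)) {I : Set ι} (hI : I.Finite) (hIp : ∀ i ∈ I, p i)
    {V : ∀ i, Set (X i)} (hV : ∀ i ∈ I, IsOpen (V i)) (hne : (I.pi V).Nonempty) :
    ∃ b ∈ B, b ∈ I.pi V := by
  obtain ⟨x, hx⟩ := hne
  obtain ⟨_, ⟨b, hb, rfl⟩, hbV⟩ := hB.exists_mem_open
    (isOpen_set_pi (hI.preimage Subtype.val_injective.injOn) fun j hj => hV j hj)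
    ⟨Subtype.restrict p x, fun j hj => hx j hj⟩
  exact ⟨b, hb, fun i hi => hbV ⟨i, hIp i hi⟩ hi⟩

theorem Dense.exists_mem_pi_ne_of_restrict [∀ i, T1Space (X i)] [∀ i, Nontrivial (X i)]
    {p : ι → Prop} [Infinite (Subtype p)] {B : Set (∀ i, X i)}
    (hB : Dense (Subtype.restrict p '' B)) {I : Set ι} (hI : I.Finite) (hIp : ∀ i ∈ I, p i)
    {V : ∀ i, Set (X i)} (hV : ∀ i ∈ I, IsOpen (V i)) {y : ∀ i, X i} (hy : y ∈ I.pi V) :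
    ∃ b ∈ B, b ∈ I.pi V ∧ b ≠ y := by
  classical
  -- a free coordinate `j ∉ I` on which `b` is required to differ from `y`
  obtain ⟨⟨j, hj⟩, hjI⟩ :=
    (hI.preimage (f := Subtype.val (p := p)) Subtype.val_injective.injOn).infinite_compl.nonempty
  obtain ⟨x, hx⟩ := exists_ne (y j)
  obtain ⟨b, hb, hbV⟩ := hB.exists_mem_pi_of_restrict (hI.insert j)
    (by rintro i (rfl | hi); exacts [hj, hIp i hi]) (V := Function.update V j {y j}ᶜ)
    (by
      rintro i (rfl | hi)
      · simp
      · simpa [ne_of_mem_of_not_mem hi hjI] using hV i hi)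
    ⟨Function.update y j x, by
      rintro i (rfl | hi)
      · simpa using hx
      · simpa [ne_of_mem_of_not_mem hi hjI] using hy i hi⟩
  refine ⟨b, hb, fun i hi => ?_, fun hby => ?_⟩
  · simpa [ne_of_mem_of_not_mem hi hjI] using hbV i (mem_insert_of_mem _ hi)
  · simpa [hby] using hbV j (mem_insert _ _)

def basicCylinder (bas : ∀ i, ℕ → Set (X i)) (F : Finset (ι × ℕ)) : Set (∀ i, X i) :=
  {w | ∀ p ∈ F, w p.1 ∈ bas p.1 p.2}

end Pi

theorem Filter.Tendsto.not_dense_range {Z : Type*} [TopologicalSpace Z] [T2Space Z]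
    [Uncountable Z] {x : ℕ → Z} {p : Z} (hx : Tendsto x atTop (𝓝 p)) : ¬ Dense (range x) := by
  intro hd
  have : (univ : Set Z) ⊆ insert p (range x) := by
    rw [← hd.closure_eq]
    exact closure_minimal (subset_insert _ _) hx.isCompact_insert_range.isClosed
  exact not_countable_univ (((countable_range x).insert p).mono this)

theorem ClusterPt.infinite_inter_preimage {α β : Type*} [TopologicalSpace β] {f : α → β}
    {S : Set α} {z : β} (hz : ClusterPt z (Filter.map f (cofinite ⊓ 𝓟 S))) {W : Set β}
    (hW : W ∈ 𝓝 z) : (S ∩ f ⁻¹' W).Infinite := by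
  have : ∃ᶠ y in Filter.map f (cofinite ⊓ 𝓟 S), y ∈ W := hz.frequently hW
  rwa [frequently_map, frequently_inf_principal, frequently_cofinite_iff_infinite] at this

theorem countablyCompact_iff_countablyCompactSpace {Z : Type*} [TopologicalSpace Z] :
    CountablyCompact Z ↔ CountablyCompactSpace Z := by
  rw [← isCountablyCompact_univ_iff, isCountablyCompact_iff_countable_open_cover]
  simp only [CountablyCompact, univ_subset_iff]

theorem Cardinal.IsRegular.exists_closure_point_lt_ord {c : Cardinal.{u}} (hc : c.IsRegular)
    (hc' : ℵ₀ < c) {f : Ordinal.{u} → Ordinal.{u}} (hf : ∀ δ < c.ord, f δ < c.ord)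
    {a : Ordinal.{u}} (ha : a < c.ord) : ∃ β, a ≤ β ∧ β < c.ord ∧ ∀ δ < β, f δ ≤ β := by
  set g : Ordinal.{u} → Ordinal.{u} := fun β => ⨆ δ : Iio β, f δ
  have hg : ∀ β < c.ord, g β < c.ord := fun β hβ =>
    Ordinal.lift_iSup_lt_of_lt_cof
      (by rwa [← Ordinal.lift_cof, hc.cof_ord, mk_Iio_ordinal, lift_lift, lift_lt, ← lt_ord])
      fun δ => hf δ (δ.2.trans hβ)
  refine ⟨Ordinal.nfp g a, Ordinal.le_nfp g a, nfp_lt_ord_of_isRegular hc hc'.ne' hg ha,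
    fun δ hδ => ?_⟩
  obtain ⟨n, hn⟩ := Ordinal.lt_nfp_iff.1 hδ
  calc f δ ≤ g (g^[n] a) := Ordinal.le_iSup (fun δ : Iio _ => f δ) ⟨δ, hn⟩
    _ = g^[n + 1] a := (Function.iterate_succ_apply' g n a).symm
    _ ≤ Ordinal.nfp g a := Ordinal.iterate_le_nfp g a (n + 1)

theorem Cardinal.IsRegular.iSup_finset_lt_ord {c : Cardinal.{u}} (hc : c.IsRegular) (hc' : ℵ₀ < c)
    {α : Type v} (hα : Cardinal.lift.{u} #α < Cardinal.lift.{v} c) (g : Finset α → Ordinal.{u})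
    (hg : ∀ F, g F < c.ord) : ⨆ F, g F < c.ord := by
  classical
  refine Ordinal.lift_iSup_lt_of_lt_cof ?_ hg
  rw [← Ordinal.lift_cof, hc.cof_ord]
  calc Cardinal.lift.{u} #(Finset α) ≤ Cardinal.lift.{u} #(List α) :=
        lift_le.2 (mk_le_of_surjective List.toFinset_surjective)
    _ ≤ Cardinal.lift.{u} (max ℵ₀ #α) := lift_le.2 (mk_list_le_max α)
    _ < Cardinal.lift.{v} c := by
      rw [lift_max, lift_aleph0]
      exact max_lt (by simpa using hc') hα

section OrdinalProduct

variable {c : Cardinal.{u}}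

theorem infinite_subtype_le_of_lt_ord (hc : ℵ₀ ≤ c) {β : Ordinal.{u}} (hβ : β < c.ord) :
    Infinite {i : {o : Ordinal // o < c.ord} // β ≤ i.val} := by
  have hlt : ∀ n : ℕ, β + n < c.ord := fun n => by
    rw [lt_ord, Ordinal.card_add, Ordinal.card_nat]
    exact add_lt_of_lt hc (lt_ord.1 hβ) ((natCast_lt_aleph0 (n := n)).trans_le hc)
  exact Infinite.of_injective (fun n : ℕ => ⟨⟨β + n, hlt n⟩, le_self_add⟩)
    fun m n h => by simpa using h

theorem mk_subtype_le_lt (hc' : ℵ₀ < c) {δ : Ordinal.{u}} (hδ : δ < c.ord) :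
    #{p : {o : Ordinal // o < c.ord} × ℕ // p.1.val ≤ δ} < lift.{u + 1} c := by
  have hδ' : (Order.succ δ).card < c := lt_ord.1 ((isSuccLimit_ord hc'.le).succ_lt hδ)
  calc #{p : {o : Ordinal // o < c.ord} × ℕ // p.1.val ≤ δ}
        ≤ #(Iio (Order.succ δ) × ℕ) :=
        mk_le_of_injective (f := fun p => (⟨p.1.1.1, Order.lt_succ_iff.2 p.2⟩, p.1.2))
          fun p q h => Subtype.ext (Prod.ext (Subtype.ext (congrArg (·.1.1) h)) (congrArg (·.2) h))
    _ = lift.{u + 1} ((Order.succ δ).card * ℵ₀) := by simp [mk_prod]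
    _ < lift.{u + 1} c := lift_lt.2 (mul_lt_of_lt hc'.le hδ' hc')

variable {X : {o : Ordinal // o < c.ord} → Type*} [∀ i, TopologicalSpace (X i)]

def DenseFrom (δ : Ordinal.{u}) (B : Set (∀ i, X i)) : Prop :=
  Dense (Subtype.restrict (fun i : {o : Ordinal // o < c.ord} => δ ≤ i.val) '' B)

def ProjectsOntoInitialProducts (Y : Set (∀ i, X i)) : Prop :=
  ∀ β < c.ord, ∀ g : ∀ i : {i : {o : Ordinal // o < c.ord} // i.val < β}, X i.val,
    ∃ y ∈ Y, ∀ i : {i : {o : Ordinal // o < c.ord} // i.val < β}, y i.val = g i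

theorem finallyDenseP_iff {S : Set (∀ i, X i)} :
    FinallyDenseP S ↔ ∃ δ < c.ord, DenseFrom δ S := by
  simp only [FinallyDenseP, DenseFrom, image, funext_iff, Subtype.restrict, eq_comm]

theorem exists_lt_ord_denseFrom_inter_basicCylinder (hc : c.IsRegular) (hc' : ℵ₀ < c)
    (bas : ∀ i, ℕ → Set (X i)) {S : Set (∀ i, X i)}
    (hS : ∀ B ⊆ S, B.Infinite → FinallyDenseP B) :
    ∃ β < c.ord, ∀ F : Finset ({o : Ordinal // o < c.ord} × ℕ), (∀ p ∈ F, p.1.val < β) →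
      (S ∩ basicCylinder bas F).Infinite → ∃ δ ≤ β, DenseFrom δ (S ∩ basicCylinder bas F) := by
  have hlev : ∀ F : Finset ({o : Ordinal // o < c.ord} × ℕ), ∃ δ < c.ord,
      (S ∩ basicCylinder bas F).Infinite → DenseFrom δ (S ∩ basicCylinder bas F) := by
    intro F
    by_cases h : (S ∩ basicCylinder bas F).Infinite
    · obtain ⟨δ, hδ, hd⟩ := finallyDenseP_iff.1 (hS _ inter_subset_left h)
      exact ⟨δ, hδ, fun _ => hd⟩
    · exact ⟨0, ord_pos.2 (aleph0_pos.trans hc'), fun h' => absurd h' h⟩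
  choose lev hlev_lt hlev using hlev
  set levAt : Ordinal.{u} → Ordinal.{u} := fun δ =>
    ⨆ F : Finset {p : {o : Ordinal // o < c.ord} × ℕ // p.1.val ≤ δ},
      lev (F.map (Function.Embedding.subtype _))
  obtain ⟨β, hβ1, hβ, hclosed⟩ := hc.exists_closure_point_lt_ord hc' (f := levAt)
    (fun δ hδ => hc.iSup_finset_lt_ord hc'
      (by rw [lift_id'.{u, u + 1}]; exact mk_subtype_le_lt hc' hδ) _ fun F => hlev_lt _)
    (a := 1) (lt_ord.2 (by simpa using one_lt_aleph0.trans hc'))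
  refine ⟨β, hβ, fun F hF hinf => ⟨lev F, ?_, hlev F hinf⟩⟩
  set δ := F.sup fun p => p.1.val
  have hδ : δ < β := (Finset.sup_lt_iff (zero_lt_one.trans_le hβ1)).2 hF
  calc lev F = lev ((F.subtype fun p => p.1.val ≤ δ).map (Function.Embedding.subtype _)) := by
        rw [Finset.subtype_map_of_mem fun p hp => Finset.le_sup (f := fun p => p.1.val) hp]
    _ ≤ levAt δ :=
        le_ciSup (f := fun F : Finset {p : {o : Ordinal // o < c.ord} × ℕ // p.1.val ≤ δ} =>
          lev (F.map (Function.Embedding.subtype _)))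
          ⟨c.ord, forall_mem_range.2 fun F => (hlev_lt _).le⟩ _
    _ ≤ β := hclosed δ hδ

theorem accPt_of_clusterPt_restrict [∀ i, T1Space (X i)] [∀ i, Nontrivial (X i)] (hc : ℵ₀ ≤ c)
    {bas : ∀ i, ℕ → Set (X i)} (hbas : ∀ i, IsTopologicalBasis (range (bas i)))
    {S : Set (∀ i, X i)} {β : Ordinal.{u}} (hβ : β < c.ord)
    (hβS : ∀ F : Finset ({o : Ordinal // o < c.ord} × ℕ), (∀ p ∈ F, p.1.val < β) →
      (S ∩ basicCylinder bas F).Infinite → ∃ δ ≤ β, DenseFrom δ (S ∩ basicCylinder bas F))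
    {y : ∀ i, X i}
    (hy : ClusterPt (Subtype.restrict (fun i : {o : Ordinal // o < c.ord} => i.val < β) y)
      (Filter.map (Subtype.restrict fun i : {o : Ordinal // o < c.ord} => i.val < β)
        (cofinite ⊓ 𝓟 S))) :
    AccPt y (𝓟 S) := by
  rw [accPt_iff_nhds]
  intro U hU
  rw [nhds_pi, Filter.mem_pi] at hU
  obtain ⟨I, hI, t, ht, hIU⟩ := hU
  have hν : ∀ i, ∃ n, y i ∈ bas i n ∧ bas i n ⊆ t i := fun i => by
    simpa using (hbas i).mem_nhds_iff.1 (ht i)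
  choose ν hyν hνt using hν
  set F := {i ∈ hI.toFinset | i.val < β}.image fun i => (i, ν i)
  have hinf : (S ∩ basicCylinder bas F).Infinite := by
    refine (hy.infinite_inter_preimage (W := (Subtype.val ⁻¹' I).pi fun i => bas i.1 (ν i.1))
      (set_pi_mem_nhds (hI.preimage Subtype.val_injective.injOn) fun i _ =>
        ((hbas i.1).isOpen (mem_range_self _)).mem_nhds (hyν i.1))).mono ?_
    rintro w ⟨hwS, hw⟩
    refine ⟨hwS, ?_⟩
    simp only [basicCylinder, F, Finset.forall_mem_image, Finset.mem_filter,
      Set.Finite.mem_toFinset]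
    exact fun i hi => hw ⟨i, hi.2⟩ hi.1
  obtain ⟨δ, hδβ, hdense⟩ := hβS F
    (by simp only [F, Finset.forall_mem_image, Finset.mem_filter]; exact fun i hi => hi.2) hinf
  have := infinite_subtype_le_of_lt_ord hc (hδβ.trans_lt hβ)
  obtain ⟨b, ⟨hbS, hbF⟩, hbI, hby⟩ := Dense.exists_mem_pi_ne_of_restrict hdense
    (hI.subset fun i hi => hi.1 : {i | i ∈ I ∧ β ≤ i.val}.Finite) (fun i hi => hδβ.trans hi.2)
    (fun i _ => (hbas i).isOpen (mem_range_self (ν i))) fun i _ => hyν i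
  refine ⟨b, ⟨hIU fun i hi => hνt i ?_, hbS⟩, hby⟩
  by_cases hiβ : i.val < β
  · exact hbF (i, ν i) (Finset.mem_image_of_mem _ (by simp [hi, hiβ]))
  · exact hbI i ⟨hi, not_lt.1 hiβ⟩

theorem exists_accPt_of_isHFDP (hc : c.IsRegular) (hc' : ℵ₀ < c) [∀ i, CompactSpace (X i)]
    [∀ i, MetrizableSpace (X i)] [∀ i, Nontrivial (X i)] {Y : Set (∀ i, X i)}
    (hY : ProjectsOntoInitialProducts Y) {S : Set (∀ i, X i)} (hS : IsHFDP S) :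
    ∃ y ∈ Y, AccPt y (𝓟 S) := by
  have (i : {o : Ordinal // o < c.ord}) : SecondCountableTopology (X i) := by
    let := metrizableSpaceMetric (X i)
    infer_instance
  choose bas hbas using fun i => exists_seq_basis (X i)
  obtain ⟨β, hβ, hβS⟩ := exists_lt_ord_denseFrom_inter_basicCylinder hc hc' bas hS.2
  have := hS.1.cofinite_inf_principal_neBot
  obtain ⟨z, hz⟩ := exists_clusterPt_of_compactSpace
    (Filter.map (Subtype.restrict fun i : {o : Ordinal // o < c.ord} => i.val < β)
      (cofinite ⊓ 𝓟 S))
  obtain ⟨y, hyY, hyz⟩ := hY β hβ z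
  refine ⟨y, hyY, accPt_of_clusterPt_restrict hc'.le hbas hβ hβS ?_⟩
  rwa [show Subtype.restrict _ y = z from funext hyz]

theorem IsHFDP.not_exists_tendsto [∀ i, T2Space (X i)] [∀ i, Nontrivial (X i)] (hc : ℵ₀ ≤ c)
    {S : Set (∀ i, X i)} (hS : IsHFDP S) {x : ℕ → ∀ i, X i} (hx : ∀ n, x n ∈ S)
    (hinj : Function.Injective x) : ¬ ∃ p, Tendsto x atTop (𝓝 p) := by
  rintro ⟨p, hp⟩
  obtain ⟨β, hβ, hd⟩ := finallyDenseP_iff.1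
    (hS.2 _ (range_subset_iff.2 hx) (infinite_range_of_injective hinj))
  have := infinite_subtype_le_of_lt_ord hc hβ
  have : Uncountable (∀ i : {i : {o : Ordinal // o < c.ord} // β ≤ i.val}, X i.val) :=
    Pi.uncountable_of_infinite
  rw [DenseFrom, ← range_comp] at hd
  exact (((continuous_pi fun i => continuous_apply i.val).tendsto p).comp hp).not_dense_range hd

theorem ProjectsOntoInitialProducts.dense (hc : ℵ₀ ≤ c) {Y : Set (∀ i, X i)}
    (hY : ProjectsOntoInitialProducts Y) : Dense Y := by
  refine dense_iff_inter_open.2 fun O hO ⟨x, hx⟩ => ?_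
  obtain ⟨I, u, hu, hIO⟩ := isOpen_pi_iff.1 hO x hx
  have hsup : I.sup (fun i => i.val) < c.ord :=
    (Finset.sup_lt_iff (ord_pos.2 (aleph0_pos.trans_le hc))).2 fun i _ => i.2
  obtain ⟨y, hyY, hy⟩ := hY _ ((isSuccLimit_ord hc).succ_lt hsup) fun i => x i.val
  refine ⟨y, hIO fun i hi => ?_, hyY⟩
  rw [hy ⟨i, Order.lt_succ_iff.2 (Finset.le_sup (f := fun i => i.val) hi)⟩]
  exact (hu i hi).2

end OrdinalProduct

/-- Proposition (Dikranjan–Tkachenko): let `λ = c.ord` be an uncountable regular cardinal and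
`X = ∏_{α<λ} X α` a product of compact metrizable spaces each with at least two points.
Suppose `Y ⊆ X` projects onto `∏_{α<β} X α` for every `β < λ`. Then every HFD set `S ⊆ Y`
has a cluster point in `Y` but contains no injective sequence converging in `X`; in
particular, if `Y` itself is HFD then `Y` is a countably compact dense subspace of `X`
without non-trivial convergent sequences. -/
theorem hfd_cluster_and_countably_compact
    (c : Cardinal) (hreg : c.IsRegular) (hunc : Cardinal.aleph0 < c)
    (X : {o : Ordinal // o < c.ord} → Type*) [∀ i, TopologicalSpace (X i)]
    [∀ i, CompactSpace (X i)] [∀ i, TopologicalSpace.MetrizableSpace (X i)]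
    [∀ i, Nontrivial (X i)]
    (Y : Set (∀ i, X i))
    (hY : ∀ β < c.ord, ∀ g : ∀ i : {i : {o : Ordinal // o < c.ord} // i.val < β}, X i.val,
      ∃ y ∈ Y, ∀ i : {i : {o : Ordinal // o < c.ord} // i.val < β}, y i.val = g i) :
    (∀ S ⊆ Y, IsHFDP S →
      (∃ y ∈ Y, AccPt y (Filter.principal S)) ∧
      ∀ x : ℕ → (∀ i, X i), (∀ n, x n ∈ S) → Function.Injective x →
        ¬ ∃ p, Filter.Tendsto x Filter.atTop (nhds p)) ∧
    (IsHFDP Y →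
      CountablyCompact ↥Y ∧ Dense Y ∧
      ∀ x : ℕ → (∀ i, X i), (∀ n, x n ∈ Y) → Function.Injective x →
        ¬ ∃ p ∈ Y, Filter.Tendsto x Filter.atTop (nhds p)) := by
  refine ⟨fun S _ hS => ⟨exists_accPt_of_isHFDP hreg hunc hY hS,
    fun x hx hinj => hS.not_exists_tendsto hunc.le hx hinj⟩, fun hYH => ⟨?_, ?_, ?_⟩⟩
  · rw [countablyCompact_iff_countablyCompactSpace, ← isCountablyCompact_iff_countablyCompactSpace,
      isCountablyCompact_iff_infinite_subset_has_accPt]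
    exact fun B hBY hB =>
      exists_accPt_of_isHFDP hreg hunc hY ⟨hB, fun T hT => hYH.2 T (hT.trans hBY)⟩
  · exact ProjectsOntoInitialProducts.dense hunc.le hY
  · rintro x hx hinj ⟨p, -, hp⟩
    exact hYH.not_exists_tendsto hunc.le hx hinj ⟨p, hp⟩
end

section
/- Let k be a positive integer, let {x_μ : μ < 𝔠} ⊆ {0,1}^{ω₁}, and let G be the subgroup of the Boolean group {0,1}^{ω₁} generated by {x_μ : μ < 𝔠}. Suppose that for every m with 1 ≤ m ≤ k, every infinite subset C of ω, and every function h : m × C → [𝔠]^{<ω} such that the set {h(i,n) : i < m, n ∈ C} is linearly independent in the 𝔽₂-vector space [𝔠]^{<ω}, the sequence of m-tuples ((∑_{μ∈h(0,n)} x_μ, …, ∑_{μ∈h(m−1,n)} x_μ))_{n∈C} has an accumulation point in G^m. Then G^k is countably compact. -/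
/-- The ordinals below the initial ordinal of the continuum: an index set of cardinality `𝔠`. -/
abbrev ContIdx : Type 1 := {o : Ordinal // o < Cardinal.continuum.ord}

/-- The ordinals below `ω₁`. -/
abbrev Omega1Idx : Type 1 := {o : Ordinal // o < (Cardinal.aleph 1).ord}

/-- `{0,1}^{ω₁}` with the product topology and coordinatewise addition. -/
abbrev CantorOmega1 : Type 1 := Omega1Idx → ZMod 2

/-- The indicator of a finite subset of `γ`, an element of the `𝔽₂`-vector space
`γ →₀ ZMod 2`, which realizes the group `[γ]^{<ω}` of finite subsets of `γ`
under symmetric difference. -/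
noncomputable def finsetIndicator {γ : Type*} (F : Finset γ) : γ →₀ ZMod 2 :=
  ∑ x ∈ F, Finsupp.single x 1

/-- A subset of an `𝔽₂`-vector space is linearly independent. -/
def SetLinIndep {M : Type*} [AddCommGroup M] [Module (ZMod 2) M] (s : Set M) : Prop :=
  LinearIndependent (ZMod 2) ((↑) : s → M)

/-!
Every element of `G` is `x̄ w := ∑ μ, w μ • x μ` for a finitely supported `w`, so a sequence in
`G^k` is the image of a sequence of `k`-tuples `(w i n)ᵢ` in `[𝔠]^{<ω}`. If some nontrivial
combination `∑ aᵢ • w i n` takes one value on an infinite set of indices, one coordinate can be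
expressed through the others there and eliminated; once no such combination exists, a greedy
choice of indices makes all the vectors involved linearly independent. This yields an infinite
`C`, some `m ≤ k` and sequences `t j` (`j < m`) with `{t j n : j < m, n ∈ C}` independent such that
on `C` every `w i n` is a fixed affine `𝔽₂`-combination of the `t j n`. The hypothesis gives an
accumulation point of `(x̄ (t j n))ⱼ` along `C`, and the continuous affine map with the same
coefficients sends it to an accumulation point of the original sequence.
-/

open Set Function Filter Topology Submodule

theorem exists_seq_of_forall_finite_exists {α : Type*} (P : Set α → α → Prop)
    (h : ∀ s : Set α, s.Finite → ∃ a, P s a) : ∃ f : ℕ → α, ∀ n, P (f '' Iio n) (f n) := by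
  have : Nonempty α := let ⟨a, _⟩ := h ∅ finite_empty; ⟨a⟩
  choose! step hstep using h
  let S : ℕ → Set α := fun n => Nat.rec ∅ (fun _ s => insert (step s) s) n
  have hS : ∀ n, S n = (fun l => step (S l)) '' Iio n := by
    intro n
    induction n with
    | zero => simp [S]
    | succ n ih => rw [Iio_add_one_eq_Iic, ← Iio_insert, image_insert_eq, ← ih]
  exact ⟨fun n => step (S n), fun n => hS n ▸ hstep _ (hS n ▸ (finite_Iio n).image _)⟩

section LinearAlgebra

variable {R V ι : Type*} [Ring R] [AddCommGroup V] [Module R V]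

theorem linearIndependent_uncurry_of_linearIndependent_mkQ (U : ι → ℕ → V)
    (hU : ∀ N, LinearIndependent R fun i => (span R (image2 U univ (Iio N))).mkQ (U i N)) :
    LinearIndependent R (uncurry U) := by
  have hblocks : ∀ N, LinearIndepOn R (uncurry U) (univ ×ˢ Iio N) := by
    intro N
    induction N with
    | zero => simp
    | succ N ih =>
      have hsplit : (univ : Set ι) ×ˢ Iio (N + 1) = univ ×ˢ Iio N ∪ univ ×ˢ {N} := by
        ext ⟨i, n⟩
        simp [le_iff_lt_or_eq]
      rw [hsplit]
      refine ih.union_of_quotient ?_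
      rw [image_uncurry_prod, prod_singleton, image_univ,
        linearIndepOn_range_iff fun _ _ h => (Prod.mk.inj h).1]
      exact hU N
  have hunion : (⋃ N, univ ×ˢ Iio N : Set (ι × ℕ)) = univ := by
    ext ⟨i, n⟩
    simpa using ⟨n + 1, by omega⟩
  rw [← linearIndepOn_univ_iff, ← hunion]
  exact linearIndepOn_iUnion_of_directed
    (Monotone.directed_le fun _ _ h => prod_mono le_rfl (Iio_subset_Iio h)) hblocks

theorem exists_infinite_linearIndepOn_of_finite_levelSets [Finite R] [Fintype ι]
    (U : ι → ℕ → V) {D : Set ℕ} (hD : D.Infinite)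
    (hU : ∀ a : ι → R, a ≠ 0 → ∀ c, {n ∈ D | ∑ i, a i • U i n = c}.Finite) :
    ∃ C ⊆ D, C.Infinite ∧ LinearIndepOn R (uncurry U) (univ ×ˢ C) := by
  have hnext : ∀ s : Set ℕ, s.Finite → ∃ n, n ∈ D ∧ n ∉ s ∧
      LinearIndependent R fun i => (span R (image2 U univ s)).mkQ (U i n) := by
    intro s hs
    set W := span R (image2 U univ s)
    have : Module.Finite R W := Module.Finite.span_of_finite R (finite_univ.image2 U hs)
    have hW : (W : Set V).Finite := by
      have := Module.finite_of_finite R (M := W)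
      exact toFinite _
    have hbad : (⋃ a ∈ {a : ι → R | a ≠ 0}, ⋃ c ∈ (W : Set V),
        {n ∈ D | ∑ i, a i • U i n = c}).Finite :=
      (toFinite _).biUnion fun a ha => hW.biUnion fun c _ => hU a ha c
    obtain ⟨n, ⟨hnD, hnbad⟩, hns⟩ := ((hD.sdiff hbad).sdiff hs).nonempty
    refine ⟨n, hnD, hns, Fintype.linearIndependent_iff.2 fun a ha =>
      congrFun (of_not_not fun hne => hnbad ?_)⟩
    have hmem : ∑ i, a i • U i n ∈ W := by
      rwa [← Submodule.Quotient.mk_eq_zero, ← mkQ_apply, map_sum]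
    exact mem_biUnion hne (mem_biUnion hmem ⟨hnD, rfl⟩)
  obtain ⟨f, hf⟩ := exists_seq_of_forall_finite_exists _ hnext
  have hinj : Injective f := Injective.of_lt_imp_ne fun l N hlN hfl => (hf N).2.1 ⟨l, hlN, hfl⟩
  have hind : LinearIndependent R (uncurry U ∘ Prod.map id f) :=
    linearIndependent_uncurry_of_linearIndependent_mkQ (fun i N => U i (f N)) fun N => by
      rw [← image2_image_right]
      exact (hf N).2.2
  refine ⟨range f, range_subset_iff.2 fun N => (hf N).1, infinite_range_of_injective hinj, ?_⟩
  rwa [← range_id, ← range_prodMap, linearIndepOn_range_iff (injective_id.prodMap hinj)]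

variable (R) in
def affineCombsOn {κ : Type*} [Fintype κ] (C : Set ℕ) (t : κ → ℕ → V) :
    Submodule R (ℕ → V) where
  carrier := {u | ∃ (c : V) (a : κ → R), ∀ n ∈ C, u n = c + ∑ j, a j • t j n}
  add_mem' := by
    rintro u u' ⟨c, a, hu⟩ ⟨c', a', hu'⟩
    refine ⟨c + c', a + a', fun n hn => ?_⟩
    simp only [Pi.add_apply, hu n hn, hu' n hn, add_smul, Finset.sum_add_distrib]
    abel
  zero_mem' := ⟨0, 0, by simp⟩
  smul_mem' := by
    rintro r u ⟨c, a, hu⟩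
    exact ⟨r • c, r • a, fun n hn => by simp [hu n hn, Finset.smul_sum, smul_smul]⟩

variable {κ : Type*} [Fintype κ] {C : Set ℕ} {t : κ → ℕ → V}

theorem mem_affineCombsOn_iff {u : ℕ → V} :
    u ∈ affineCombsOn R C t ↔ ∃ (c : V) (a : κ → R), ∀ n ∈ C, u n = c + ∑ j, a j • t j n :=
  Iff.rfl

theorem const_mem_affineCombsOn (c : V) : (fun _ => c) ∈ affineCombsOn R C t :=
  ⟨c, 0, by simp⟩

theorem apply_mem_affineCombsOn [DecidableEq κ] (j : κ) : t j ∈ affineCombsOn R C t :=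
  ⟨0, Pi.single j 1, by simp [Pi.single_apply]⟩

theorem mem_affineCombsOn_of_eqOn {u u' : ℕ → V} (h : EqOn u u' C)
    (hu' : u' ∈ affineCombsOn R C t) : u ∈ affineCombsOn R C t :=
  let ⟨c, a, hu'⟩ := hu'
  ⟨c, a, fun n hn => (h hn).trans (hu' n hn)⟩

end LinearAlgebra

section FiniteField

variable {K : Type*} [Field K] [Finite K]

theorem exists_infinite_linearIndepOn_affineCombsOn {V ι : Type*} [AddCommGroup V] [Module K V]
    [Fintype ι] (U : ι → ℕ → V) {D : Set ℕ} (hD : D.Infinite) :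
    ∃ C ⊆ D, C.Infinite ∧ ∃ m ≤ Fintype.card ι, ∃ t : Fin m → ℕ → V,
      LinearIndepOn K (uncurry t) (univ ×ˢ C) ∧ ∀ i, U i ∈ affineCombsOn K C t := by
  classical
  induction hN : Fintype.card ι using Nat.strong_induction_on generalizing ι D with
  | _ N ih =>
  by_cases hU : ∀ a : ι → K, a ≠ 0 → ∀ c, {n ∈ D | ∑ i, a i • U i n = c}.Finite
  · obtain ⟨C, hCD, hC, hind⟩ := exists_infinite_linearIndepOn_of_finite_levelSets U hD hU
    let e := Fintype.equivFinOfCardEq hN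
    refine ⟨C, hCD, hC, N, le_rfl, fun j => U (e.symm j), ?_, fun i => ?_⟩
    · refine (linearIndepOn_equiv (e.symm.prodCongr (.refl ℕ)) (f := uncurry U)).2 ?_
      rwa [Equiv.prodCongr_apply, prodMap_image_prod, Equiv.coe_refl, image_id,
        image_univ_of_surjective e.symm.surjective]
    · simpa using apply_mem_affineCombsOn (R := K) (C := C) (t := fun j => U (e.symm j)) (e i)
  · push Not at hU
    obtain ⟨a, ha, c, hlevel⟩ := hU
    obtain ⟨i₀, hi₀⟩ := Function.ne_iff.1 ha
    obtain ⟨C, hCD, hC, m, hm, t, ht, hmem⟩ :=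
      ih _ (hN ▸ Fintype.card_subtype_lt (p := (· ≠ i₀)) (x := i₀) (by simp))
        (fun i : {i // i ≠ i₀} => U i) hlevel rfl
    refine ⟨C, hCD.trans (sep_subset _ _), hC, m, hm.trans (hN ▸ Fintype.card_subtype_le _), t,
      ht, fun i => ?_⟩
    rcases eq_or_ne i i₀ with rfl | hi
    · refine mem_affineCombsOn_of_eqOn
        (u' := (a i)⁻¹ • ((fun _ => c) - ∑ i' : {i' // i' ≠ i}, a i' • U i')) (fun n hn => ?_)
        (smul_mem _ _ (sub_mem (const_mem_affineCombsOn c)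
          (sum_mem fun i' _ => smul_mem _ _ (hmem i'))))
      have hrel := (hCD hn).2
      rw [Fintype.sum_eq_add_sum_subtype_ne _ i] at hrel
      simp only [Pi.smul_apply, Pi.sub_apply, Finset.sum_apply]
      rw [eq_inv_smul_iff₀ hi₀, ← hrel, add_sub_cancel_right]
    · exact hmem ⟨i, hi⟩

theorem exists_mapClusterPt_of_forall_linearIndepOn {γ M : Type*} [AddCommGroup M] [Module K M]
    [TopologicalSpace M] [ContinuousAdd M] [ContinuousConstSMul K M] (x : γ → M) (k : ℕ)
    (hacc : ∀ m ≤ k, ∀ C : Set ℕ, C.Infinite → ∀ t : Fin m → ℕ → γ →₀ K,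
      LinearIndepOn K (uncurry t) (univ ×ˢ C) → ∃ p : Fin m → M, (∀ j, p j ∈ span K (range x)) ∧
        MapClusterPt p (atTop ⊓ 𝓟 C) fun n j => Finsupp.linearCombination K x (t j n))
    (y : ℕ → Fin k → M) (hy : ∀ n i, y n i ∈ span K (range x)) :
    ∃ q : Fin k → M, (∀ i, q i ∈ span K (range x)) ∧ MapClusterPt q atTop y := by
  set xbar := Finsupp.linearCombination K x
  have hrange : ∀ g, g ∈ span K (range x) ↔ ∃ w, xbar w = g := fun g => by
    rw [← Finsupp.range_linearCombination, LinearMap.mem_range]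
  choose w hw using fun n i => (hrange _).1 (hy n i)
  obtain ⟨C, -, hC, m, hm, t, ht, hmem⟩ :=
    exists_infinite_linearIndepOn_affineCombsOn (K := K) (fun i n => w n i) infinite_univ
  choose c A hA using fun i => mem_affineCombsOn_iff.1 (hmem i)
  obtain ⟨p, hpx, hp⟩ := hacc m (by simpa using hm) C hC t ht
  let T : (Fin m → M) → Fin k → M := fun p i => xbar (c i) + ∑ j, A i j • p j
  refine ⟨T p, fun i => add_mem ((hrange _).2 ⟨_, rfl⟩)
    (sum_mem fun j _ => smul_mem _ _ (hpx j)), ?_⟩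
  have hT : Continuous T := by fun_prop
  refine ((hp.continuousAt_comp hT.continuousAt).congrFun ?_).mono inf_le_left
  filter_upwards [mem_inf_of_right (mem_principal_self C)] with n hn
  funext i
  simp [T, ← hw, hA i n hn]

end FiniteField

theorem mem_addSubgroupClosure_iff_mem_span_zmod {n : ℕ} {M : Type*} [AddCommGroup M]
    [Module (ZMod n) M] {s : Set M} {g : M} :
    g ∈ AddSubgroup.closure s ↔ g ∈ span (ZMod n) s :=
  ⟨fun h => (AddSubgroup.closure_le (K := (span (ZMod n) s).toAddSubgroup)).2 subset_span h,
    fun h => (span_le (p := AddSubgroup.toZModSubmodule n (.closure s))).2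
      AddSubgroup.subset_closure h⟩

theorem finsetIndicator_apply {γ : Type*} [DecidableEq γ] (F : Finset γ) (a : γ) :
    finsetIndicator F a = if a ∈ F then 1 else 0 := by
  simp [finsetIndicator, Finsupp.finsetSum_apply, Finsupp.single_apply]

theorem finsetIndicator_support {γ : Type*} (w : γ →₀ ZMod 2) :
    finsetIndicator w.support = w := by
  classical
  have h01 : ∀ b : ZMod 2, (if b ≠ 0 then 1 else 0) = b := by decide
  ext a
  simpa [finsetIndicator_apply] using h01 (w a)

theorem linearCombination_finsetIndicator {γ M : Type*} [AddCommGroup M] [Module (ZMod 2) M]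
    (x : γ → M) (F : Finset γ) :
    Finsupp.linearCombination (ZMod 2) x (finsetIndicator F) = ∑ a ∈ F, x a := by
  simp [finsetIndicator, map_sum]

theorem exists_finsetIndicator_eq_setLinIndep {γ : Type*} {m : ℕ} {C : Set ℕ}
    {t : Fin m → ℕ → γ →₀ ZMod 2} (ht : LinearIndepOn (ZMod 2) (uncurry t) (univ ×ˢ C)) :
    ∃ h : ℕ → ℕ → Finset γ, (∀ (j : Fin m) n, finsetIndicator (h j n) = t j n) ∧
      SetLinIndep {v | ∃ i n, i < m ∧ n ∈ C ∧ v = finsetIndicator (h i n)} := by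
  let h : ℕ → ℕ → Finset γ := fun i n => if hi : i < m then (t ⟨i, hi⟩ n).support else ∅
  have hh : ∀ (j : Fin m) n, finsetIndicator (h j n) = t j n := fun j n => by
    simp [h, finsetIndicator_support]
  refine ⟨h, hh, ?_⟩
  have hset : {v | ∃ i n, i < m ∧ n ∈ C ∧ v = finsetIndicator (h i n)} =
      uncurry t '' (univ ×ˢ C) := by
    ext v
    constructor
    · rintro ⟨i, n, hi, hn, rfl⟩
      exact ⟨(⟨i, hi⟩, n), ⟨trivial, hn⟩, (hh ⟨i, hi⟩ n).symm⟩
    · rintro ⟨⟨j, n⟩, ⟨-, hn⟩, rfl⟩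
      exact ⟨j, n, j.2, hn, (hh j n).symm⟩
  rw [SetLinIndep, hset]
  exact ht.id_image

theorem mapClusterPt_atTop_inf_principal_iff {X : Type*} [TopologicalSpace X] {p : X}
    {C : Set ℕ} {u : ℕ → X} :
    MapClusterPt p (atTop ⊓ 𝓟 C) u ↔ ∀ V ∈ 𝓝 p, {n | n ∈ C ∧ u n ∈ V}.Infinite := by
  simp only [mapClusterPt_iff_frequently, frequently_inf_principal,
    Nat.frequently_atTop_iff_infinite]

theorem exists_mapClusterPt_linearCombination_of_accumulation {γ M : Type*} [AddCommGroup M]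
    [Module (ZMod 2) M] [TopologicalSpace M] {x : γ → M} {m : ℕ} {C : Set ℕ} (hC : C.Infinite)
    {t : Fin m → ℕ → γ →₀ ZMod 2} (ht : LinearIndepOn (ZMod 2) (uncurry t) (univ ×ˢ C))
    (hacc : 1 ≤ m → ∀ h : ℕ → ℕ → Finset γ,
      SetLinIndep {v | ∃ i n, i < m ∧ n ∈ C ∧ v = finsetIndicator (h i n)} →
      ∃ p : Fin m → M, (∀ i, p i ∈ AddSubgroup.closure (range x)) ∧
        ∀ V ∈ 𝓝 p, {n | n ∈ C ∧ (fun i : Fin m => ∑ μ ∈ h i.val n, x μ) ∈ V}.Infinite) :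
    ∃ p : Fin m → M, (∀ j, p j ∈ span (ZMod 2) (range x)) ∧
      MapClusterPt p (atTop ⊓ 𝓟 C) fun n j => Finsupp.linearCombination (ZMod 2) x (t j n) := by
  rcases m.eq_zero_or_pos with rfl | hm
  · refine ⟨0, finZeroElim, mapClusterPt_atTop_inf_principal_iff.2 fun V hV => ?_⟩
    exact hC.mono fun n hn => ⟨hn, by convert mem_of_mem_nhds hV⟩
  obtain ⟨h, hh, hind⟩ := exists_finsetIndicator_eq_setLinIndep ht
  obtain ⟨p, hpx, hp⟩ := hacc hm h hind
  refine ⟨p, fun j => mem_addSubgroupClosure_iff_mem_span_zmod.1 (hpx j),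
    mapClusterPt_atTop_inf_principal_iff.2 ?_⟩
  simpa only [← hh, linearCombination_finsetIndicator] using hp

theorem Topology.IsInducing.mapClusterPt_comp_iff {X Y α : Type*} [TopologicalSpace X]
    [TopologicalSpace Y] {f : X → Y} (hf : IsInducing f) {x : X} {F : Filter α} {u : α → X} :
    MapClusterPt (f x) F (f ∘ u) ↔ MapClusterPt x F u := by
  rw [MapClusterPt, ← Filter.map_map]
  exact hf.mapClusterPt_iff

theorem countablyCompact_of_forall_mapClusterPt {X : Type*} [TopologicalSpace X]
    (h : ∀ y : ℕ → X, ∃ q, MapClusterPt q atTop y) : CountablyCompact X := by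
  have hX : IsCountablyCompact (univ : Set X) :=
    .of_seq_clusterPt fun y _ => let ⟨q, hq⟩ := h y; ⟨q, mem_univ q, hq⟩
  intro U hU hcover
  obtain ⟨F, hF⟩ := hX.elim_finite_subcover hU hcover.ge
  exact ⟨F, univ_subset_iff.1 hF⟩

theorem countablyCompact_power_of_accumulation_general
    (k : ℕ) (x : ContIdx → CantorOmega1)
    (hacc : ∀ m : ℕ, 1 ≤ m → m ≤ k → ∀ C : Set ℕ, C.Infinite →
      ∀ h : ℕ → ℕ → Finset ContIdx,
        SetLinIndep {v : ContIdx →₀ ZMod 2 |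
          ∃ i n, i < m ∧ n ∈ C ∧ v = finsetIndicator (h i n)} →
        ∃ p : Fin m → CantorOmega1,
          (∀ i : Fin m, p i ∈ AddSubgroup.closure (Set.range x)) ∧
          ∀ V ∈ nhds p,
            {n : ℕ | n ∈ C ∧ (fun i : Fin m => ∑ μ ∈ h i.val n, x μ) ∈ V}.Infinite) :
    CountablyCompact (Fin k → ↥(AddSubgroup.closure (Set.range x))) := by
  refine countablyCompact_of_forall_mapClusterPt fun y => ?_
  obtain ⟨q, hqx, hq⟩ := exists_mapClusterPt_of_forall_linearIndepOn x k
    (fun m hm C hC t ht =>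
      exists_mapClusterPt_linearCombination_of_accumulation hC ht fun hm0 => hacc m hm0 hm C hC)
    (fun n i => y n i) fun n i => mem_addSubgroupClosure_iff_mem_span_zmod.1 (y n i).2
  refine ⟨fun i => ⟨q i, mem_addSubgroupClosure_iff_mem_span_zmod.2 (hqx i)⟩, ?_⟩
  exact (IsInducing.piMap fun _ => IsInducing.subtypeVal).mapClusterPt_comp_iff.1 hq

/-- Let `k` be positive, `{x μ : μ < 𝔠} ⊆ {0,1}^{ω₁}` and let `G` be the subgroup generated
by the `x μ`. Suppose that for every `1 ≤ m ≤ k`, every infinite `C ⊆ ω` and every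
`h : m × C → [𝔠]^{<ω}` with `{h i n : i < m, n ∈ C}` linearly independent in the
`𝔽₂`-vector space `[𝔠]^{<ω}`, the sequence `((∑_{μ ∈ h i n} x μ)_{i<m})_{n ∈ C}` has an
accumulation point in `G^m`. Then `G^k` is countably compact. -/
theorem countablyCompact_power_of_accumulation
    (k : ℕ) (hk : 0 < k) (x : ContIdx → CantorOmega1)
    (hacc : ∀ m : ℕ, 1 ≤ m → m ≤ k → ∀ C : Set ℕ, C.Infinite →
      ∀ h : ℕ → ℕ → Finset ContIdx,
        SetLinIndep {v : ContIdx →₀ ZMod 2 |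
          ∃ i n, i < m ∧ n ∈ C ∧ v = finsetIndicator (h i n)} →
        ∃ p : Fin m → CantorOmega1,
          (∀ i : Fin m, p i ∈ AddSubgroup.closure (Set.range x)) ∧
          ∀ V ∈ nhds p,
            {n : ℕ | n ∈ C ∧ (fun i : Fin m => ∑ μ ∈ h i.val n, x μ) ∈ V}.Infinite) :
    CountablyCompact (Fin k → ↥(AddSubgroup.closure (Set.range x))) :=
  countablyCompact_power_of_accumulation_general k x hacc
end

section
/- Let G be a non-discrete Hausdorff topological abelian group in which every element g satisfies g + g = 0 (identity 0), and let k be a positive integer. Then there is a countable family {U_n : n < ω} of nonempty open subsets of G^{k+1} such that for every choice of points x_n ∈ U_n (n < ω), the set {x_n(i) : i ≤ k, n < ω} of coordinates is linearly independent in G. -/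
/-!
Choose open neighbourhoods `V 0 ⊇ V 1 ⊇ ⋯` of `0` with `V (n+1) + V (n+1) ⊆ V n`, and points
`g n ∈ V n` such that `-g n ∉ V (n+1) + V (n+1) + V (n+1)`; non-discreteness supplies `g n ≠ 0`
and the Hausdorff property lets the next neighbourhood avoid `-g n`. If `z m ∈ V m` and
`z m ∈ g m + V (m+1)` for every `m`, then in a finite sum of distinct `z m` the terms after the
least index `s` add up to an element of `V (s+1) + V (s+1)`, so the whole sum lies in
`g s + (V (s+1) + V (s+1) + V (s+1))`, which does not contain `0`. The sets `U n` are products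
of such cells, after enumerating the pairs `(n, i)` by `ℕ`.
-/

/-- A subset `S` of a Boolean group is linearly independent if `0 ∉ S` and the sum of every
nonempty finite subset of `S` is nonzero. -/
def BoolIndep {G : Type*} [AddCommGroup G] (S : Set G) : Prop :=
  0 ∉ S ∧ ∀ F : Finset G, ↑F ⊆ S → F.Nonempty → ∑ g ∈ F, g ≠ 0

open Topology Filter Pointwise

theorem boolIndep_range {G ι : Type*} [AddCommGroup G] {z : ι → G}
    (hz : ∀ S : Finset ι, S.Nonempty → ∑ i ∈ S, z i ≠ 0) : BoolIndep (Set.range z) := by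
  classical
  refine ⟨fun ⟨i, hi⟩ => hz {i} (Finset.singleton_nonempty i) (by simpa using hi),
    fun F hF hFne => ?_⟩
  obtain ⟨S, -, hinj, rfl⟩ :=
    Finset.exists_subset_injOn_image_eq_of_surjOn Set.univ F (by simpa [Set.SurjOn] using hF)
  rw [Finset.sum_image hinj]
  exact hz S (Finset.image_nonempty.mp hFne)

structure IndepChain {G : Type*} [AddCommGroup G] (V : ℕ → Set G) (g : ℕ → G) : Prop where
  zero_mem : ∀ n, (0 : G) ∈ V n
  add_subset : ∀ n, V (n + 1) + V (n + 1) ⊆ V n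
  mem : ∀ n, g n ∈ V n
  neg_notMem : ∀ n, -g n ∉ V (n + 1) + V (n + 1) + V (n + 1)

namespace IndepChain

variable {G : Type*} [AddCommGroup G] {V : ℕ → Set G} {g : ℕ → G}

def cell (V : ℕ → Set G) (g : ℕ → G) (n : ℕ) : Set G :=
  V n ∩ (g n +ᵥ V (n + 1))

theorem antitone (hc : IndepChain V g) : Antitone V :=
  antitone_nat_of_succ_le fun n =>
    (Set.subset_add_left _ (hc.zero_mem (n + 1))).trans (hc.add_subset n)

theorem sum_mem_add_of_le (hc : IndepChain V g) {z : ℕ → G} (hz : ∀ m, z m ∈ V m)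
    (S : Finset ℕ) : ∀ t, (∀ m ∈ S, t ≤ m) → ∑ m ∈ S, z m ∈ V t + V t := by
  classical
  induction S using Finset.induction_on_min with
  | empty => exact fun t _ => by simpa using Set.add_mem_add (hc.zero_mem t) (hc.zero_mem t)
  | insert a S ha ih =>
    intro t ht
    have hrest : ∑ m ∈ S, z m ∈ V a := hc.add_subset a (ih (a + 1) ha)
    have hta : t ≤ a := ht a (Finset.mem_insert_self a S)
    rw [Finset.sum_insert fun h => lt_irrefl a (ha a h)]
    exact Set.add_mem_add (hc.antitone hta (hz a)) (hc.antitone hta hrest)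

theorem self_mem_cell (hc : IndepChain V g) (n : ℕ) : g n ∈ cell V g n :=
  ⟨hc.mem n, Set.mem_vadd_set.mpr ⟨0, hc.zero_mem (n + 1), add_zero (g n)⟩⟩

theorem sum_ne_zero (hc : IndepChain V g) {z : ℕ → G} (hz : ∀ m, z m ∈ cell V g m)
    {S : Finset ℕ} (hS : S.Nonempty) : ∑ m ∈ S, z m ≠ 0 := by
  classical
  intro hsum
  set s := S.min' hS
  have htail : ∑ m ∈ S.erase s, z m ∈ V (s + 1) + V (s + 1) :=
    hc.sum_mem_add_of_le (fun m => (hz m).1) _ _ fun m hm => S.min'_lt_of_mem_erase_min' hS hm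
  obtain ⟨v, hv, hvz⟩ := Set.mem_vadd_set.mp (hz s).2
  rw [← Finset.add_sum_erase S z (S.min'_mem hS), ← hvz, vadd_eq_add, add_assoc] at hsum
  apply hc.neg_notMem s
  rw [neg_eq_of_add_eq_zero_right hsum, add_assoc]
  exact Set.add_mem_add hv htail

end IndepChain

section Topological

variable {G : Type*} [AddCommGroup G] [TopologicalSpace G] [IsTopologicalAddGroup G]

theorem IndepChain.isOpen_cell {V : ℕ → Set G} (hV : ∀ n, IsOpen (V n)) (g : ℕ → G) (n : ℕ) :
    IsOpen (IndepChain.cell V g n) :=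
  (hV n).inter ((hV (n + 1)).vadd (g n))

theorem exists_ne_zero_mem_of_not_discreteTopology (hnd : ¬DiscreteTopology G) {V : Set G}
    (hV : IsOpen V) (h0 : (0 : G) ∈ V) : ∃ g ∈ V, g ≠ 0 := by
  by_contra! h
  have hV0 : V = {0} := (Set.nonempty_of_mem h0).subset_singleton_iff.mp h
  exact hnd (discreteTopology_of_isOpen_singleton_zero (hV0 ▸ hV))

theorem exists_open_nhds_zero_add_add_subset {s : Set G} (hs : s ∈ 𝓝 (0 : G)) :
    ∃ W : Set G, IsOpen W ∧ (0 : G) ∈ W ∧ W + W + W ⊆ s := by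
  obtain ⟨U, hU, hU0, hUs⟩ := exists_open_nhds_zero_add_subset hs
  obtain ⟨W, hW, hW0, hWU⟩ := exists_open_nhds_zero_add_subset (hU.mem_nhds hU0)
  exact ⟨W, hW, hW0,
    (Set.add_subset_add hWU ((Set.subset_add_left W hW0).trans hWU)).trans hUs⟩

theorem exists_indepChain_step [T1Space G] (hnd : ¬DiscreteTopology G) {V : Set G}
    (hV : IsOpen V) (h0 : (0 : G) ∈ V) :
    ∃ (W : Set G) (g : G), IsOpen W ∧ (0 : G) ∈ W ∧ W + W ⊆ V ∧ g ∈ V ∧ -g ∉ W + W + W := by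
  obtain ⟨g, hgV, hg0⟩ := exists_ne_zero_mem_of_not_discreteTopology hnd hV h0
  have hs : V ∩ {-g}ᶜ ∈ 𝓝 (0 : G) :=
    inter_mem (hV.mem_nhds h0) (isOpen_compl_singleton.mem_nhds (by simpa [eq_comm] using hg0))
  obtain ⟨W, hW, hW0, hWs⟩ := exists_open_nhds_zero_add_add_subset hs
  exact ⟨W, g, hW, hW0, (Set.subset_add_left _ hW0).trans (hWs.trans Set.inter_subset_left),
    hgV, fun h => (hWs h).2 rfl⟩

theorem exists_indepChain [T1Space G] (hnd : ¬DiscreteTopology G) :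
    ∃ (V : ℕ → Set G) (g : ℕ → G), IndepChain V g ∧ ∀ n, IsOpen (V n) := by
  choose! W g hW using fun V : Set G => fun h : IsOpen V ∧ (0 : G) ∈ V =>
    exists_indepChain_step hnd h.1 h.2
  let V : ℕ → Set G := fun n => Nat.rec Set.univ (fun _ => W) n
  have hV : ∀ n, IsOpen (V n) ∧ (0 : G) ∈ V n := by
    intro n
    induction n with
    | zero => exact ⟨isOpen_univ, Set.mem_univ 0⟩
    | succ n ih => exact ⟨(hW _ ih).1, (hW _ ih).2.1⟩
  exact ⟨V, fun n => g (V n),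
    ⟨fun n => (hV n).2, fun n => (hW _ (hV n)).2.2.1, fun n => (hW _ (hV n)).2.2.2.1,
      fun n => (hW _ (hV n)).2.2.2.2⟩, fun n => (hV n).1⟩

end Topological

theorem exists_open_family_forcing_independence_general (G : Type*) [AddCommGroup G]
    [TopologicalSpace G] [IsTopologicalAddGroup G] [T2Space G]
    (hnd : ¬ DiscreteTopology G) (k : ℕ) :
    ∃ U : ℕ → Set (Fin (k + 1) → G), (∀ n, IsOpen (U n)) ∧ (∀ n, (U n).Nonempty) ∧
      ∀ x : ℕ → (Fin (k + 1) → G), (∀ n, x n ∈ U n) →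
        BoolIndep {g : G | ∃ (n : ℕ) (i : Fin (k + 1)), g = x n i} := by
  obtain ⟨V, g, hc, hV⟩ := exists_indepChain hnd
  let e : ℕ ≃ ℕ × Fin (k + 1) := Nat.divModEquiv (k + 1)
  refine ⟨fun n => Set.univ.pi fun i => IndepChain.cell V g (e.symm (n, i)),
    fun n => isOpen_set_pi Set.finite_univ fun i _ => IndepChain.isOpen_cell hV g _,
    fun n => ⟨fun i => g (e.symm (n, i)), fun i _ => hc.self_mem_cell _⟩, fun x hx => ?_⟩
  have hrange : {a : G | ∃ (n : ℕ) (i : Fin (k + 1)), a = x n i} =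
      Set.range ((fun p : ℕ × Fin (k + 1) => x p.1 p.2) ∘ e) := by
    rw [e.surjective.range_comp]
    ext a
    simp only [Set.mem_ofPred_eq, Set.mem_range, Prod.exists, eq_comm]
  rw [hrange]
  exact boolIndep_range fun S hS =>
    hc.sum_ne_zero (fun m => by simpa using hx (e m).1 (e m).2 trivial) hS

/-- Let `G` be a non-discrete Hausdorff topological Boolean group and let `k` be a positive
integer. Then there is a countable family `{U n : n < ω}` of nonempty open subsets of
`G^(k+1)` such that whenever `x n ∈ U n` for each `n < ω`, the set
`{x n (i) : i ≤ k, n < ω}` of coordinates is linearly independent in `G`. -/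
theorem exists_open_family_forcing_independence (G : Type*) [AddCommGroup G]
    [TopologicalSpace G] [IsTopologicalAddGroup G] [T2Space G]
    (hnd : ¬ DiscreteTopology G) (hbool : ∀ g : G, g + g = 0) (k : ℕ) (hk : 0 < k) :
    ∃ U : ℕ → Set (Fin (k + 1) → G), (∀ n, IsOpen (U n)) ∧ (∀ n, (U n).Nonempty) ∧
      ∀ x : ℕ → (Fin (k + 1) → G), (∀ n, x n ∈ U n) →
        BoolIndep {g : G | ∃ (n : ℕ) (i : Fin (k + 1)), g = x n i} :=
  exists_open_family_forcing_independence_general G hnd k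
end

section
/- Let G be a non-discrete Hausdorff topological abelian group in which every element g satisfies g + g = 0, with identity 0. Then there exists a sequence (W_n)_{n<ω} of nonempty open subsets of G such that 0 ∉ ∑_{n∈F} W_n for every nonempty finite subset F of ω, where ∑_{n∈F} W_n = { ∑_{n∈F} w_n : w_n ∈ W_n for each n ∈ F }. -/
/-!
Choose neighbourhoods of zero `U 0 ⊇ U 1 ⊇ ⋯` with `U (n + 1) + U (n + 1) ⊆ U n` and nonempty open
`W n ⊆ U n` with `W n` disjoint from `-(U (n + 1) + U (n + 1))`; non-discreteness provides a point
`x ≠ 0` near zero, and the Hausdorff property separates it from zero. If `m` is the least index of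
`F`, the terms with larger indices sum into `U (m + 1) + U (m + 1)`, so adding `w m` cannot give `0`.
-/

open Set Filter Topology Pointwise

theorem Finset.sum_mem_add_of_add_subset {G : Type*} [AddCommMonoid G] {U : ℕ → Set G}
    (h0 : ∀ n, (0 : G) ∈ U n) (hU : ∀ n, U (n + 1) + U (n + 1) ⊆ U n) {f : ℕ → G}
    (J : Finset ℕ) {k : ℕ} (hk : ∀ j ∈ J, k ≤ j) (hf : ∀ j ∈ J, f j ∈ U j) :
    ∑ j ∈ J, f j ∈ U k + U k := by
  have hanti : Antitone U := antitone_nat_of_succ_le fun n x hx ↦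
    hU n (by simpa using Set.add_mem_add hx (h0 (n + 1)))
  induction J using Finset.induction_on_min generalizing k with
  | empty => simpa using Set.add_mem_add (h0 k) (h0 k)
  | insert a s has ih =>
    simp only [Finset.mem_insert, forall_eq_or_imp] at hk hf
    have hrest : ∑ j ∈ s, f j ∈ U a := hU a (ih has hf.2)
    rw [Finset.sum_insert fun h ↦ (has a h).false]
    exact Set.add_mem_add (hanti hk.1 hf.1) (hanti hk.1 hrest)

section

variable {G : Type*} [AddGroup G] [TopologicalSpace G] [IsTopologicalAddGroup G]

theorem exists_mem_ne_zero_of_not_discreteTopology (hnd : ¬ DiscreteTopology G) {U : Set G}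
    (hU : IsOpen U) (h0 : (0 : G) ∈ U) : ∃ x ∈ U, x ≠ 0 := by
  by_contra! h
  exact hnd (discreteTopology_iff_isOpen_singleton_zero.2
    (eq_singleton_iff_unique_mem.2 ⟨h0, h⟩ ▸ hU))

theorem exists_isOpen_disjoint_neg_add_self [T2Space G] (hnd : ¬ DiscreteTopology G)
    {U : Set G} (hU : U ∈ 𝓝 0) :
    ∃ W, IsOpen W ∧ W.Nonempty ∧ W ⊆ U ∧
      ∃ V ∈ 𝓝 (0 : G), V + V ⊆ U ∧ Disjoint W (-(V + V)) := by
  obtain ⟨x, hxU, hx0⟩ := exists_mem_ne_zero_of_not_discreteTopology hnd isOpen_interior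
    (mem_interior_iff_mem_nhds.2 hU)
  obtain ⟨u, v, hu, hv, hxu, h0v, huv⟩ := t2_separation hx0
  obtain ⟨V, hVo, h0V, hVV⟩ := exists_open_nhds_zero_add_subset
    (inter_mem hU (neg_mem_nhds_zero G (hv.mem_nhds h0v)))
  refine ⟨u ∩ interior U, hu.inter isOpen_interior, ⟨x, hxu, hxU⟩,
    inter_subset_right.trans interior_subset, V, hVo.mem_nhds h0V,
    hVV.trans inter_subset_left, ?_⟩
  exact huv.mono inter_subset_left (neg_subset.2 (hVV.trans inter_subset_right))

end

theorem exists_open_sets_sums_avoid_zero_general (G : Type*) [AddCommGroup G] [TopologicalSpace G]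
    [IsTopologicalAddGroup G] [T2Space G] (hnd : ¬ DiscreteTopology G) :
    ∃ W : ℕ → Set G, (∀ n, IsOpen (W n)) ∧ (∀ n, (W n).Nonempty) ∧
      ∀ F : Finset ℕ, F.Nonempty → ∀ w : ℕ → G, (∀ n ∈ F, w n ∈ W n) →
        ∑ n ∈ F, w n ≠ 0 := by
  choose! W hWo hWne hWU V hV hVV hWV using
    fun U (hU : U ∈ 𝓝 (0 : G)) ↦ exists_isOpen_disjoint_neg_add_self hnd hU
  set U : ℕ → Set G := fun n ↦ V^[n] univ
  have hUsucc (n : ℕ) : U (n + 1) = V (U n) := Function.iterate_succ_apply' V n univ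
  have hU (n : ℕ) : U n ∈ 𝓝 0 := by
    induction n with
    | zero => exact univ_mem
    | succ n ih => exact hUsucc n ▸ hV _ ih
  refine ⟨fun n ↦ W (U n), fun n ↦ hWo _ (hU n), fun n ↦ hWne _ (hU n), ?_⟩
  intro F hF w hw hsum
  set m := F.min' hF
  have hm : m ∈ F := F.min'_mem hF
  have htail : ∑ n ∈ F.erase m, w n ∈ U (m + 1) + U (m + 1) :=
    Finset.sum_mem_add_of_add_subset (fun n ↦ mem_of_mem_nhds (hU n))
      (fun n ↦ hUsucc n ▸ hVV _ (hU n)) _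
      (fun n hn ↦ F.min'_lt_of_mem_erase_min' hF hn)
      (fun n hn ↦ hWU _ (hU n) (hw n (Finset.mem_of_mem_erase hn)))
  rw [← Finset.add_sum_erase F w hm, add_eq_zero_iff_eq_neg] at hsum
  exact (hWV _ (hU m)).ne_of_mem (hw m hm) (hUsucc m ▸ neg_mem_neg.2 htail) hsum

/-- Let `G` be a non-discrete Hausdorff topological abelian group in which every element `g`
satisfies `g + g = 0`. Then there exists a sequence `(W n)` of nonempty open subsets of `G`
such that `0 ∉ ∑_{n ∈ F} W n` for every nonempty finite `F ⊆ ω`, i.e. no choice of points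
`w n ∈ W n` (for `n ∈ F`) sums to `0`. -/
theorem exists_open_sets_sums_avoid_zero (G : Type*) [AddCommGroup G] [TopologicalSpace G]
    [IsTopologicalAddGroup G] [T2Space G] (hnd : ¬ DiscreteTopology G)
    (hbool : ∀ g : G, g + g = 0) :
    ∃ W : ℕ → Set G, (∀ n, IsOpen (W n)) ∧ (∀ n, (W n).Nonempty) ∧
      ∀ F : Finset ℕ, F.Nonempty → ∀ w : ℕ → G, (∀ n ∈ F, w n ∈ W n) →
        ∑ n ∈ F, w n ≠ 0 :=
  exists_open_sets_sums_avoid_zero_general G hnd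
end
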